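/- arXiv:1705.04807 — 5 statements merged into one kernel-verified Lean document; each statement's English description precedes it below -/
import Mathlib

section
/- For two entries of a contained sub-matrix that are consecutive in a row-major (or column-major) traversal of that sub-matrix, the absolute difference of their Morton-hybrid linear indices is at least 1 and at most T·(T-1)+1 ≤ T², i.e., bounded by a quantity depending only on T (both entries lie within one T × T row-major block of T² consecutive addresses). -/
/-- The Morton (Z-order) index of Cartesian coordinates `(i, j)` in a
`2^m × 2^m` matrix: bit interleaving, `Σ_k (2·i_k + j_k)·4^k`. -/
def mortonIndex (m i j : ℕ) : ℕ :=
  ∑ k ∈ Finset.range m, (2 * (i / 2 ^ k % 2) + j / 2 ^ k % 2) * 4 ^ k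

/-- The Morton-hybrid linear address of entry `(i, j)` in a `2^m × 2^m` matrix
with truncation threshold `T = 2^t`: the `T × T` blocks are ordered by the Morton
index of their block coordinates, and each block is stored row-major. -/
def mhAddr (m t i j : ℕ) : ℕ :=
  (2 ^ t) ^ 2 * mortonIndex (m - t) (i / 2 ^ t) (j / 2 ^ t) +
    i % 2 ^ t * 2 ^ t + j % 2 ^ t

/-! Inside one `T × T` block the Morton part of the address is constant, so addresses
differ exactly as the row-major indices `i * T + j` do. Consecutive entries of a contained
sub-matrix are at most one row apart, hence at most `T` addresses apart. -/

lemma Nat.div_eq_of_mem_block {T k x : ℕ} (hlo : k * T ≤ x) (hhi : x < k * T + T) :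
    x / T = k :=
  Nat.div_eq_of_lt_le hlo (by rwa [add_one_mul])

lemma mhAddr_sub_mhAddr_of_div_eq (m t : ℕ) {i j i' j' : ℕ}
    (hi : i' / 2 ^ t = i / 2 ^ t) (hj : j' / 2 ^ t = j / 2 ^ t) :
    (mhAddr m t i' j' : ℤ) - mhAddr m t i j = (i' - i) * 2 ^ t + (j' - j) := by
  have hdiv (x : ℕ) : ((x % 2 ^ t : ℕ) : ℤ) = x - 2 ^ t * (x / 2 ^ t : ℕ) := by
    rw [eq_sub_iff_add_eq]; exact_mod_cast Nat.mod_add_div x (2 ^ t)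
  simp only [mhAddr, hi, hj, Nat.cast_add, Nat.cast_mul, hdiv]
  push_cast
  ring

lemma Nat.max_sub_min_eq_natAbs (a b : ℕ) : max a b - min a b = ((b : ℤ) - a).natAbs := by
  omega

lemma Nat.self_le_mul_pred_add_one (T : ℕ) : T ≤ T * (T - 1) + 1 := by
  rcases T with _ | T
  · simp
  · simp only [Nat.add_sub_cancel]; nlinarith

lemma Nat.mul_pred_add_one_le_sq {T : ℕ} (hT : 0 < T) : T * (T - 1) + 1 ≤ T ^ 2 := by
  rw [Nat.mul_sub_one, sq]
  have : T ≤ T * T := Nat.le_mul_self T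
  omega

theorem contained_consecutive_address_jump_general (m t : ℕ)
    (T : ℕ) (hT : T = 2 ^ t) (i0 j0 r c : ℕ)
    (hcontained : ∃ k1 k2 : ℕ,
      k1 * T ≤ i0 ∧ i0 + r ≤ k1 * T + T ∧ k2 * T ≤ j0 ∧ j0 + c ≤ k2 * T + T)
    (i j i' j' : ℕ)
    (hin : i0 ≤ i ∧ i < i0 + r ∧ j0 ≤ j ∧ j < j0 + c)
    (hin' : i0 ≤ i' ∧ i' < i0 + r ∧ j0 ≤ j' ∧ j' < j0 + c)
    (hconsec : (i' = i ∧ j' = j + 1) ∨ (i' = i + 1 ∧ j = j0 + c - 1 ∧ j' = j0)) :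
    1 ≤ max (mhAddr m t i j) (mhAddr m t i' j') -
          min (mhAddr m t i j) (mhAddr m t i' j') ∧
    max (mhAddr m t i j) (mhAddr m t i' j') -
          min (mhAddr m t i j) (mhAddr m t i' j') ≤ T * (T - 1) + 1 ∧
    T * (T - 1) + 1 ≤ T ^ 2 := by
  subst hT
  obtain ⟨k1, k2, hi0, hir, hj0, hjc⟩ := hcontained
  have hdiff := mhAddr_sub_mhAddr_of_div_eq m t
    ((Nat.div_eq_of_mem_block (x := i') (k := k1) (by omega) (by omega)).trans
      (Nat.div_eq_of_mem_block (x := i) (by omega) (by omega)).symm)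
    ((Nat.div_eq_of_mem_block (x := j') (k := k2) (by omega) (by omega)).trans
      (Nat.div_eq_of_mem_block (x := j) (by omega) (by omega)).symm)
  -- A row wrap jumps by `T - (c - 1)` addresses, and `1 ≤ c ≤ T`.
  have hjump : 1 ≤ (mhAddr m t i' j' : ℤ) - mhAddr m t i j ∧
      (mhAddr m t i' j' : ℤ) - mhAddr m t i j ≤ (2 ^ t : ℕ) := by
    rcases hconsec with ⟨rfl, rfl⟩ | ⟨rfl, rfl, rfl⟩ <;> rw [hdiff] <;> push_cast <;>
      constructor <;> nlinarith
  rw [Nat.max_sub_min_eq_natAbs]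
  refine ⟨by omega, ?_, Nat.mul_pred_add_one_le_sq (Nat.two_pow_pos t)⟩
  have := Nat.self_le_mul_pred_add_one (2 ^ t)
  generalize 2 ^ t = T at *
  omega

/-- For two entries of a contained sub-matrix (one lying entirely in
a single `T × T` row-major block) that are consecutive in the row-major traversal
of the sub-matrix, the absolute difference of their Morton-hybrid linear indices
is at least 1 and at most `T·(T-1)+1 ≤ T²`. -/
theorem contained_consecutive_address_jump (m t : ℕ) (ht : t ≤ m)
    (T : ℕ) (hT : T = 2 ^ t) (i0 j0 r c : ℕ) (hr : 0 < r) (hc : 0 < c)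
    (hbound : i0 + r ≤ 2 ^ m ∧ j0 + c ≤ 2 ^ m)
    (hcontained : ∃ k1 k2 : ℕ,
      k1 * T ≤ i0 ∧ i0 + r ≤ k1 * T + T ∧ k2 * T ≤ j0 ∧ j0 + c ≤ k2 * T + T)
    (i j i' j' : ℕ)
    (hin : i0 ≤ i ∧ i < i0 + r ∧ j0 ≤ j ∧ j < j0 + c)
    (hin' : i0 ≤ i' ∧ i' < i0 + r ∧ j0 ≤ j' ∧ j' < j0 + c)
    (hconsec : (i' = i ∧ j' = j + 1) ∨ (i' = i + 1 ∧ j = j0 + c - 1 ∧ j' = j0)) :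
    1 ≤ max (mhAddr m t i j) (mhAddr m t i' j') -
          min (mhAddr m t i j) (mhAddr m t i' j') ∧
    max (mhAddr m t i j) (mhAddr m t i' j') -
          min (mhAddr m t i j) (mhAddr m t i' j') ≤ T * (T - 1) + 1 ∧
    T * (T - 1) + 1 ≤ T ^ 2 :=
  contained_consecutive_address_jump_general m t T hT i0 j0 r c hcontained i j i' j' hin hin'
    hconsec
end

section
/- For an entry at row-column offset (i, j) from the start of a contained sub-matrix whose containing row-major T × T block starts at linear address σ, the Morton-hybrid linear index of the entry equals σ' + i·T + j, where σ' is the linear address of the sub-matrix's first entry; in particular address computation within a contained sub-matrix requires only row-major offset arithmetic. -/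
lemma div_add_of_lt {x y T : ℕ} (h : x % T + y < T) : (x + y) / T = x / T := by
  conv_lhs => rw [← Nat.div_add_mod x T, Nat.add_assoc]
  rw [Nat.mul_add_div (lt_of_le_of_lt (Nat.zero_le _) h)]
  · simp [Nat.div_eq_of_lt h]

lemma mod_add_of_lt {x y T : ℕ} (h : x % T + y < T) : (x + y) % T = x % T + y := by
  conv_lhs => rw [← Nat.div_add_mod x T, Nat.add_assoc, Nat.mul_add_mod]
  exact Nat.mod_eq_of_lt h

/-- For an entry at row-column offset `(i, j)` from the start
`(i0, j0)` of a contained sub-matrix (so that the entry stays inside the same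
row-major `T × T` block, i.e. `i0 % T + i < T` and `j0 % T + j < T`), the
Morton-hybrid linear index of the entry equals `σ' + i·T + j`, where
`σ' = mhAddr m t i0 j0` is the linear address of the sub-matrix's first entry:
address computation within a contained sub-matrix is row-major offset
arithmetic. -/
theorem contained_rowmajor_offset (m t : ℕ) (ht : t ≤ m)
    (T : ℕ) (hT : T = 2 ^ t) (i0 j0 i j : ℕ)
    (hmat : i0 + i < 2 ^ m ∧ j0 + j < 2 ^ m)
    (hi : i0 % T + i < T) (hj : j0 % T + j < T) :
    mhAddr m t (i0 + i) (j0 + j) = mhAddr m t i0 j0 + i * T + j := by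
  subst hT
  simp only [mhAddr, div_add_of_lt hi, div_add_of_lt hj, mod_add_of_lt hi, mod_add_of_lt hj]
  ring
end

section
/- Let M^k be an aligned sub-matrix of a Morton-hybrid matrix whose elements occupy λ consecutive linear addresses starting at address α, with λ a multiple of 4 and the block above the T × T threshold. Then its four Morton-ordered quadrants NW, NE, SW, SE occupy λ/4 consecutive addresses each, starting at addresses α, α + λ/4, α + 2λ/4, and α + 3λ/4 respectively. -/
lemma mortonIndex_mod (s x y : ℕ) :
    mortonIndex s (x % 2 ^ s) (y % 2 ^ s) = mortonIndex s x y := by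
  unfold mortonIndex
  refine Finset.sum_congr rfl fun k hk => ?_
  simp only [Finset.mem_range] at hk
  have h2 : (2:ℕ) ^ s = 2 ^ k * 2 ^ (s - k) := by rw [← pow_add]; congr 1; omega
  have key : ∀ w : ℕ, w % 2 ^ s / 2 ^ k % 2 = w / 2 ^ k % 2 := by
    intro w
    rw [h2, Nat.mod_mul_right_div_self]
    exact Nat.mod_mod_of_dvd _ (dvd_pow_self 2 (by omega))
  rw [key x, key y]

lemma mortonIndex_lt (s x y : ℕ) : mortonIndex s x y < 4 ^ s := by
  induction s with
  | zero => simp [mortonIndex]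
  | succ s ih =>
    rw [mortonIndex, Finset.sum_range_succ, ← mortonIndex]
    have h1 : x / 2 ^ s % 2 ≤ 1 := by omega
    have h2 : y / 2 ^ s % 2 ≤ 1 := by omega
    have : (2 * (x / 2 ^ s % 2) + y / 2 ^ s % 2) * 4 ^ s ≤ 3 * 4 ^ s :=
      Nat.mul_le_mul_right _ (by omega)
    have h4 : (4:ℕ) ^ (s + 1) = 4 ^ s + 3 * 4 ^ s := by ring
    omega

lemma mortonIndex_add (s r x y : ℕ) :
    mortonIndex (s + r) x y =
      mortonIndex s x y + 4 ^ s * mortonIndex r (x / 2 ^ s) (y / 2 ^ s) := by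
  unfold mortonIndex
  rw [Finset.sum_range_add, Finset.mul_sum]
  congr 1
  refine Finset.sum_congr rfl fun k hk => ?_
  have hx : x / 2 ^ (s + k) = x / 2 ^ s / 2 ^ k := by
    rw [Nat.div_div_eq_div_mul, ← pow_add]
  have hy : y / 2 ^ (s + k) = y / 2 ^ s / 2 ^ k := by
    rw [Nat.div_div_eq_div_mul, ← pow_add]
  rw [hx, hy, pow_add]; ring

lemma mortonIndex_surj (s : ℕ) : ∀ z : ℕ, z < 4 ^ s →
    ∃ x y : ℕ, x < 2 ^ s ∧ y < 2 ^ s ∧ mortonIndex s x y = z := by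
  induction s with
  | zero =>
    intro z hz
    exact ⟨0, 0, one_pos, one_pos, by simp [mortonIndex]; omega⟩
  | succ s ih =>
    intro z hz
    obtain ⟨x, y, hx, hy, hxy⟩ := ih (z % 4 ^ s) (Nat.mod_lt _ (by positivity))
    set d := z / 4 ^ s with hd
    have hd4 : d < 4 := by
      rw [hd]
      apply Nat.div_lt_of_lt_mul
      rw [pow_succ] at hz; omega
    refine ⟨x + d / 2 * 2 ^ s, y + d % 2 * 2 ^ s, ?_, ?_, ?_⟩
    · have : d / 2 ≤ 1 := by omega
      have : d / 2 * 2 ^ s ≤ 2 ^ s := by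
        calc d / 2 * 2 ^ s ≤ 1 * 2 ^ s := Nat.mul_le_mul_right _ this
        _ = 2 ^ s := one_mul _
      rw [pow_succ]; omega
    · have : d % 2 ≤ 1 := by omega
      have : d % 2 * 2 ^ s ≤ 2 ^ s := by
        calc d % 2 * 2 ^ s ≤ 1 * 2 ^ s := Nat.mul_le_mul_right _ this
        _ = 2 ^ s := one_mul _
      rw [pow_succ]; omega
    · rw [mortonIndex_add s 1]
      have e1 : ∀ w c : ℕ, w < 2 ^ s → (w + c * 2 ^ s) % 2 ^ s = w := by
        intro w c hw
        rw [Nat.add_mul_mod_self_right, Nat.mod_eq_of_lt hw]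
      have e2 : ∀ w c : ℕ, w < 2 ^ s → (w + c * 2 ^ s) / 2 ^ s = c := by
        intro w c hw
        rw [Nat.add_mul_div_right _ _ (by positivity : 0 < 2 ^ s),
          Nat.div_eq_of_lt hw, Nat.zero_add]
      have hm : mortonIndex s (x + d / 2 * 2 ^ s) (y + d % 2 * 2 ^ s) = z % 4 ^ s := by
        rw [← mortonIndex_mod, e1 _ _ hx, e1 _ _ hy]; exact hxy
      rw [hm, e2 _ _ hx, e2 _ _ hy]
      have hm1 : ∀ e : ℕ, e < 4 → mortonIndex 1 (e / 2) (e % 2) = e := by decide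
      rw [hm1 d hd4, hd]
      exact Nat.mod_add_div z (4 ^ s)

lemma range_helper (B L lo r mu : ℕ) (hlo : lo < L) (hr : r < B) :
    B * (L * mu) ≤ B * (lo + L * mu) + r ∧
    B * (lo + L * mu) + r < B * (L * mu) + B * L := by
  constructor
  · calc B * (L * mu) ≤ B * (lo + L * mu) := Nat.mul_le_mul_left _ (by omega)
      _ ≤ B * (lo + L * mu) + r := Nat.le_add_right _ _
  · calc B * (lo + L * mu) + r < B * (lo + L * mu) + B := by omega
      _ = B * (lo + 1) + B * (L * mu) := by ring
      _ ≤ B * L + B * (L * mu) := Nat.add_le_add_right (Nat.mul_le_mul_left _ (by omega)) _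
      _ = B * (L * mu) + B * L := by ring

lemma coord_helper (P S T x d : ℕ) (hx : x < S) (hd : d < T) :
    P * (S * T) ≤ (x + P * S) * T + d ∧ (x + P * S) * T + d < (P + 1) * (S * T) := by
  constructor
  · calc P * (S * T) = P * S * T := by ring
      _ ≤ (x + P * S) * T := Nat.mul_le_mul_right _ (Nat.le_add_left _ _)
      _ ≤ _ := Nat.le_add_right _ _
  · calc (x + P * S) * T + d < (x + P * S) * T + T := by omega
      _ = (x + P * S + 1) * T := by ring
      _ ≤ (S + P * S) * T := Nat.mul_le_mul_right _ (by omega)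
      _ = (P + 1) * (S * T) := by ring

/-- Let `M^k` be an aligned sub-matrix arising in the Morton
recursion (side `n = 2^a·T`, rows `[p·n, (p+1)·n)`, columns `[q·n, (q+1)·n)`),
whose `λ = n²` elements occupy consecutive linear addresses starting at
`α = mhAddr(p·n, q·n)`, with `λ` a multiple of 4 (i.e. `a ≥ 1`, the block above
the threshold). Then its four Morton-ordered quadrants NW, NE, SW, SE (quadrant
`(u, v)`, `u, v ∈ {0,1}`, has Morton position `2u+v`) occupy `λ/4` consecutive
addresses each, starting at `α`, `α + λ/4`, `α + 2·λ/4`, `α + 3·λ/4`. -/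
theorem quadrants_occupy_consecutive_quarters (m t a : ℕ) (ht : t ≤ m)
    (ha : 1 ≤ a) (ham : a ≤ m - t) (p q : ℕ)
    (hp : (p + 1) * 2 ^ a ≤ 2 ^ (m - t)) (hq : (q + 1) * 2 ^ a ≤ 2 ^ (m - t))
    (T n α lam : ℕ) (hT : T = 2 ^ t) (hn : n = 2 ^ a * T)
    (hα : α = mhAddr m t (p * n) (q * n)) (hlam : lam = n ^ 2) :
    ∀ u v : ℕ, u ≤ 1 → v ≤ 1 → ∀ z : ℕ,
      (∃ i j : ℕ,
          p * n + u * (n / 2) ≤ i ∧ i < p * n + (u + 1) * (n / 2) ∧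
          q * n + v * (n / 2) ≤ j ∧ j < q * n + (v + 1) * (n / 2) ∧
          mhAddr m t i j = z) ↔
      (α + (2 * u + v) * (lam / 4) ≤ z ∧ z < α + (2 * u + v + 1) * (lam / 4)) := by
  intro u v hu hv z
  obtain ⟨s, rfl⟩ : ∃ s, a = s + 1 := ⟨a - 1, by omega⟩
  obtain ⟨b, hb⟩ : ∃ b, m - t = s + (1 + b) := ⟨m - t - (s + 1), by omega⟩
  have hT0 : 0 < T := by rw [hT]; positivity
  have hT20 : 0 < T ^ 2 := by positivity
  set μ' := mortonIndex (1 + b) (2 * p + u) (2 * q + v) with hμ'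
  -- basic size facts
  have hn2 : n = 2 * (2 ^ s * T) := by rw [hn]; ring
  have hN : n / 2 = 2 ^ s * T := by rw [hn2]; exact Nat.mul_div_cancel_left _ (by norm_num)
  -- α value
  have hα1 : α = T ^ 2 * mortonIndex (m - t) (p * 2 ^ (s + 1)) (q * 2 ^ (s + 1)) := by
    rw [hα]
    simp only [mhAddr, ← hT]
    rw [show p * n = p * 2 ^ (s + 1) * T from by rw [hn]; ring,
      show q * n = q * 2 ^ (s + 1) * T from by rw [hn]; ring,
      Nat.mul_div_cancel _ hT0, Nat.mul_div_cancel _ hT0,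
      Nat.mul_mod_left, Nat.mul_mod_left]
    ring
  have hα2 : mortonIndex (m - t) (p * 2 ^ (s + 1)) (q * 2 ^ (s + 1))
      = 4 ^ (s + 1) * mortonIndex b p q := by
    rw [show m - t = (s + 1) + b from by omega, mortonIndex_add,
      Nat.mul_div_cancel _ (by positivity : 0 < (2:ℕ) ^ (s + 1)),
      Nat.mul_div_cancel _ (by positivity : 0 < (2:ℕ) ^ (s + 1))]
    have hzero : mortonIndex (s + 1) (p * 2 ^ (s + 1)) (q * 2 ^ (s + 1)) = 0 := by
      rw [← mortonIndex_mod, Nat.mul_mod_left, Nat.mul_mod_left]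
      simp [mortonIndex]
    rw [hzero, Nat.zero_add]
  have hαval : α = T ^ 2 * (4 ^ (s + 1) * mortonIndex b p q) := by rw [hα1, hα2]
  -- μ' value
  have hμval : μ' = 2 * u + v + 4 * mortonIndex b p q := by
    rw [hμ', mortonIndex_add 1 b]
    simp only [pow_one]
    have h1x : mortonIndex 1 (2 * p + u) (2 * q + v) = 2 * u + v := by
      simp [mortonIndex]
      omega
    rw [h1x, show (2 * p + u) / 2 = p from by omega,
      show (2 * q + v) / 2 = q from by omega]
  -- lam value
  have hlam4 : lam / 4 = 4 ^ s * T ^ 2 := by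
    have h44 : (4:ℕ) ^ s = 2 ^ s * 2 ^ s := by rw [← mul_pow]; norm_num
    have : lam = 4 * (4 ^ s * T ^ 2) := by rw [hlam, hn, h44]; ring
    rw [this]
    exact Nat.mul_div_cancel_left _ (by norm_num)
  -- endpoints
  have E1 : α + (2 * u + v) * (lam / 4) = T ^ 2 * (4 ^ s * μ') := by
    rw [hαval, hlam4, hμval]; ring
  have E2 : α + (2 * u + v + 1) * (lam / 4) = T ^ 2 * (4 ^ s * μ') + T ^ 2 * 4 ^ s := by
    rw [hαval, hlam4, hμval]; ring
  have f1 : p * n + u * (n / 2) = (2 * p + u) * (2 ^ s * T) := by rw [hN, hn2]; ring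
  have f2 : p * n + (u + 1) * (n / 2) = (2 * p + u + 1) * (2 ^ s * T) := by
    rw [hN, hn2]; ring
  have f3 : q * n + v * (n / 2) = (2 * q + v) * (2 ^ s * T) := by rw [hN, hn2]; ring
  have f4 : q * n + (v + 1) * (n / 2) = (2 * q + v + 1) * (2 ^ s * T) := by
    rw [hN, hn2]; ring
  constructor
  · rintro ⟨i, j, hi1, hi2, hj1, hj2, rfl⟩
    rw [f1] at hi1; rw [f2] at hi2; rw [f3] at hj1; rw [f4] at hj2
    have hIlo : (2 * p + u) * 2 ^ s ≤ i / T := (Nat.le_div_iff_mul_le hT0).mpr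
      (by calc (2 * p + u) * 2 ^ s * T = (2 * p + u) * (2 ^ s * T) := by ring
        _ ≤ i := hi1)
    have hIhi : i / T < (2 * p + u + 1) * 2 ^ s := (Nat.div_lt_iff_lt_mul hT0).mpr
      (by calc i < (2 * p + u + 1) * (2 ^ s * T) := hi2
        _ = (2 * p + u + 1) * 2 ^ s * T := by ring)
    have hJlo : (2 * q + v) * 2 ^ s ≤ j / T := (Nat.le_div_iff_mul_le hT0).mpr
      (by calc (2 * q + v) * 2 ^ s * T = (2 * q + v) * (2 ^ s * T) := by ring
        _ ≤ j := hj1)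
    have hJhi : j / T < (2 * q + v + 1) * 2 ^ s := (Nat.div_lt_iff_lt_mul hT0).mpr
      (by calc j < (2 * q + v + 1) * (2 ^ s * T) := hj2
        _ = (2 * q + v + 1) * 2 ^ s * T := by ring)
    have hIdiv : i / T / 2 ^ s = 2 * p + u := Nat.div_eq_of_lt_le hIlo hIhi
    have hJdiv : j / T / 2 ^ s = 2 * q + v := Nat.div_eq_of_lt_le hJlo hJhi
    have hM : mortonIndex (m - t) (i / T) (j / T)
        = mortonIndex s (i / T) (j / T) + 4 ^ s * μ' := by
      rw [hb, mortonIndex_add, hIdiv, hJdiv]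
    have hzval : mhAddr m t i j
        = T ^ 2 * (mortonIndex s (i / T) (j / T) + 4 ^ s * μ')
          + (i % T * T + j % T) := by
      simp only [mhAddr, ← hT]
      rw [hM]; ring
    rw [E1, E2, hzval]
    have hr : i % T * T + j % T < T ^ 2 := by
      have h1 : i % T < T := Nat.mod_lt _ hT0
      have h2 : j % T < T := Nat.mod_lt _ hT0
      calc i % T * T + j % T < i % T * T + T := by omega
        _ = (i % T + 1) * T := by ring
        _ ≤ T * T := Nat.mul_le_mul_right _ (by omega)
        _ = T ^ 2 := by ring
    exact range_helper _ _ _ _ _ (mortonIndex_lt s _ _) hr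
  · rintro ⟨h1, h2⟩
    rw [E1] at h1; rw [E2] at h2
    obtain ⟨AA, hAA⟩ : ∃ AA, AA = T ^ 2 * (4 ^ s * μ') := ⟨_, rfl⟩
    obtain ⟨BB, hBB⟩ : ∃ BB, BB = T ^ 2 * 4 ^ s := ⟨_, rfl⟩
    rw [← hAA] at h1 h2
    rw [← hBB] at h2
    obtain ⟨w, hw1, hw2⟩ : ∃ w, z = AA + w ∧ w < BB := ⟨z - AA, by omega, by omega⟩
    have hc : w / T ^ 2 < 4 ^ s := Nat.div_lt_of_lt_mul
      (by rw [hBB] at hw2; exact hw2)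
    obtain ⟨x, y, hx, hy, hxy⟩ := mortonIndex_surj s (w / T ^ 2) hc
    set rr := w % T ^ 2 with hrr
    have hrrT : rr < T ^ 2 := Nat.mod_lt _ hT20
    have hrdT : rr / T < T := Nat.div_lt_of_lt_mul
      (by calc rr < T ^ 2 := hrrT
        _ = T * T := by ring)
    have hreT : rr % T < T := Nat.mod_lt _ hT0
    have em : ∀ w c : ℕ, w < 2 ^ s → (w + c * 2 ^ s) % 2 ^ s = w := by
      intro w c hw
      rw [Nat.add_mul_mod_self_right, Nat.mod_eq_of_lt hw]
    have ed : ∀ w c : ℕ, w < 2 ^ s → (w + c * 2 ^ s) / 2 ^ s = c := by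
      intro w c hw
      rw [Nat.add_mul_div_right _ _ (by positivity : 0 < (2:ℕ) ^ s),
        Nat.div_eq_of_lt hw, Nat.zero_add]
    have divmod : ∀ I d : ℕ, d < T → (I * T + d) / T = I ∧ (I * T + d) % T = d := by
      intro I d hd
      constructor
      · rw [add_comm, Nat.add_mul_div_right _ _ hT0, Nat.div_eq_of_lt hd, Nat.zero_add]
      · rw [add_comm, Nat.add_mul_mod_self_right, Nat.mod_eq_of_lt hd]
    refine ⟨(x + (2 * p + u) * 2 ^ s) * T + rr / T,
            (y + (2 * q + v) * 2 ^ s) * T + rr % T, ?_, ?_, ?_, ?_, ?_⟩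
    · rw [f1]; exact (coord_helper _ _ _ _ _ hx hrdT).1
    · rw [f2]; exact (coord_helper _ _ _ _ _ hx hrdT).2
    · rw [f3]; exact (coord_helper _ _ _ _ _ hy hreT).1
    · rw [f4]; exact (coord_helper _ _ _ _ _ hy hreT).2
    · have hIdd := divmod (x + (2 * p + u) * 2 ^ s) (rr / T) hrdT
      have hJdd := divmod (y + (2 * q + v) * 2 ^ s) (rr % T) hreT
      have hMs : mortonIndex s (x + (2 * p + u) * 2 ^ s) (y + (2 * q + v) * 2 ^ s)
          = w / T ^ 2 := by
        rw [← mortonIndex_mod, em _ _ hx, em _ _ hy]; exact hxy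
      have hval : mhAddr m t ((x + (2 * p + u) * 2 ^ s) * T + rr / T)
            ((y + (2 * q + v) * 2 ^ s) * T + rr % T)
          = T ^ 2 * (w / T ^ 2 + 4 ^ s * μ') + (rr / T * T + rr % T) := by
        simp only [mhAddr, ← hT]
        rw [hIdd.1, hIdd.2, hJdd.1, hJdd.2, hb, mortonIndex_add,
          ed _ _ hx, ed _ _ hy, hMs, ← hμ']
        ring
      rw [hval]
      have hrrsplit : rr / T * T + rr % T = rr := by
        rw [mul_comm]; exact Nat.div_add_mod rr T
      have hwsplit : T ^ 2 * (w / T ^ 2) + rr = w := by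
        rw [hrr]; exact Nat.div_add_mod w (T ^ 2)
      calc T ^ 2 * (w / T ^ 2 + 4 ^ s * μ') + (rr / T * T + rr % T)
          = (T ^ 2 * (w / T ^ 2) + rr) + T ^ 2 * (4 ^ s * μ') := by rw [hrrsplit]; ring
        _ = w + T ^ 2 * (4 ^ s * μ') := by rw [hwsplit]
        _ = w + AA := by rw [hAA]
        _ = z := by omega
end

section
/- If S is a scattered sub-matrix of a Morton-hybrid matrix (it intersects at least two distinct T × T row-major blocks), then there exist two entries of S consecutive in some row-major traversal of S whose Morton-hybrid linear addresses differ by more than T² − T, i.e., the address jump exceeds the maximum possible jump within a single contained block. -/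
lemma mortonIndex_succ (M i j : ℕ) :
    mortonIndex (M + 1) i j
      = 2 * (i % 2) + j % 2 + 4 * mortonIndex M (i / 2) (j / 2) := by
  unfold mortonIndex
  rw [Finset.sum_range_succ', Finset.mul_sum]
  simp only [pow_zero, Nat.div_one, mul_one]
  rw [add_comm]
  congr 1
  apply Finset.sum_congr rfl
  intro k _
  have h1 : i / 2 ^ (k + 1) = i / 2 / 2 ^ k := by
    rw [Nat.div_div_eq_div_mul, pow_succ']
  have h2 : j / 2 ^ (k + 1) = j / 2 / 2 ^ k := by
    rw [Nat.div_div_eq_div_mul, pow_succ']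
  rw [h1, h2, pow_succ]
  ring

lemma morton_col_mono (M : ℕ) : ∀ i j j' : ℕ, j < j' → j' < 2 ^ M →
    mortonIndex M i j + 1 ≤ mortonIndex M i j' := by
  induction M with
  | zero => intro i j j' h h'; omega
  | succ M ih =>
    intro i j j' h h'
    rw [mortonIndex_succ, mortonIndex_succ]
    have h2 : j / 2 ≤ j' / 2 := Nat.div_le_div_right h.le
    rcases eq_or_lt_of_le h2 with heq | hlt
    · rw [heq]
      set X := mortonIndex M (i / 2) (j' / 2)
      omega
    · have hb : j' / 2 < 2 ^ M := by
        have hp : (2:ℕ) ^ (M+1) = 2 ^ M * 2 := pow_succ 2 M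
        omega
      have hkey := ih (i / 2) (j / 2) (j' / 2) hlt hb
      set p := mortonIndex M (i / 2) (j / 2)
      set q := mortonIndex M (i / 2) (j' / 2)
      omega

lemma morton_row_mono (M : ℕ) : ∀ i i' j : ℕ, i < i' → i' < 2 ^ M →
    mortonIndex M i j + 2 ≤ mortonIndex M i' j := by
  induction M with
  | zero => intro i i' j h h'; omega
  | succ M ih =>
    intro i i' j h h'
    rw [mortonIndex_succ, mortonIndex_succ]
    have h2 : i / 2 ≤ i' / 2 := Nat.div_le_div_right h.le
    rcases eq_or_lt_of_le h2 with heq | hlt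
    · rw [heq]
      set X := mortonIndex M (i' / 2) (j / 2)
      omega
    · have hb : i' / 2 < 2 ^ M := by
        have hp : (2:ℕ) ^ (M+1) = 2 ^ M * 2 := pow_succ 2 M
        omega
      have hkey := ih (i / 2) (i' / 2) (j / 2) hlt hb
      set p := mortonIndex M (i / 2) (j / 2)
      set q := mortonIndex M (i' / 2) (j / 2)
      omega

lemma div_lt_pow_sub (m t x : ℕ) (ht : t ≤ m) (hx : x < 2 ^ m) :
    x / 2 ^ t < 2 ^ (m - t) := by
  rw [Nat.div_lt_iff_lt_mul (Nat.two_pow_pos t)]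
  calc x < 2 ^ m := hx
    _ = 2 ^ (m - t) * 2 ^ t := by rw [← pow_add, Nat.sub_add_cancel ht]

/-- If `S` is a scattered sub-matrix of a `2^m × 2^m`
Morton-hybrid matrix with threshold `T = 2^t` (i.e. it has two entries lying in
distinct `T × T` row-major blocks), then there exist two entries of `S`
consecutive in the row-major traversal of `S` whose Morton-hybrid linear
addresses differ by more than `T² − T`. -/
theorem scattered_has_large_jump (m t : ℕ) (ht : t ≤ m)
    (T : ℕ) (hT : T = 2 ^ t) (i0 j0 r c : ℕ) (hr : 0 < r) (hc : 0 < c)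
    (hbound : i0 + r ≤ 2 ^ m ∧ j0 + c ≤ 2 ^ m)
    (hscattered : ∃ i j i' j' : ℕ,
      (i0 ≤ i ∧ i < i0 + r ∧ j0 ≤ j ∧ j < j0 + c) ∧
      (i0 ≤ i' ∧ i' < i0 + r ∧ j0 ≤ j' ∧ j' < j0 + c) ∧
      (i / T ≠ i' / T ∨ j / T ≠ j' / T)) :
    ∃ i j i' j' : ℕ,
      (i0 ≤ i ∧ i < i0 + r ∧ j0 ≤ j ∧ j < j0 + c) ∧
      (i0 ≤ i' ∧ i' < i0 + r ∧ j0 ≤ j' ∧ j' < j0 + c) ∧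
      ((i' = i ∧ j' = j + 1) ∨ (i' = i + 1 ∧ j = j0 + c - 1 ∧ j' = j0)) ∧
      T ^ 2 - T <
        max (mhAddr m t i j) (mhAddr m t i' j') -
          min (mhAddr m t i j) (mhAddr m t i' j') := by
  subst hT
  obtain ⟨hbr, hbc⟩ := hbound
  have hT0 : 0 < 2 ^ t := Nat.two_pow_pos t
  have hTS : 2 ^ t ≤ (2 ^ t) ^ 2 := by nlinarith
  have hTT : (2 ^ t - 1) * 2 ^ t = (2 ^ t) ^ 2 - 2 ^ t := by
    rw [Nat.sub_mul, one_mul, ← pow_two]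
  obtain ⟨i1, j1, i2, j2, hw1, hw2, hd⟩ := hscattered
  by_cases hAB : (j0 + c - 1) / 2 ^ t = j0 / 2 ^ t
  · -- all columns in same block column; rows must cross
    have hdrow : i1 / 2 ^ t ≠ i2 / 2 ^ t := by
      rcases hd with h | h
      · exact h
      · exfalso
        have l1 : j0 / 2 ^ t ≤ j1 / 2 ^ t := Nat.div_le_div_right hw1.2.2.1
        have l2 : j1 / 2 ^ t ≤ (j0 + c - 1) / 2 ^ t := Nat.div_le_div_right (by omega)
        have l3 : j0 / 2 ^ t ≤ j2 / 2 ^ t := Nat.div_le_div_right hw2.2.2.1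
        have l4 : j2 / 2 ^ t ≤ (j0 + c - 1) / 2 ^ t := Nat.div_le_div_right (by omega)
        omega
    obtain ⟨u, v, huv, hu0, hv0⟩ :
        ∃ u v, u / 2 ^ t < v / 2 ^ t ∧ i0 ≤ u ∧ v < i0 + r := by
      rcases lt_or_gt_of_ne hdrow with h | h
      · exact ⟨i1, i2, h, hw1.1, hw2.2.1⟩
      · exact ⟨i2, i1, h, hw2.1, hw1.2.1⟩
    have hdm : 2 ^ t * (u / 2 ^ t) + u % 2 ^ t = u := Nat.div_add_mod u (2 ^ t)
    have hml : u % 2 ^ t < 2 ^ t := Nat.mod_lt u hT0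
    have hsucc : 2 ^ t * (u / 2 ^ t) + (2 ^ t - 1) + 1 = 2 ^ t * (u / 2 ^ t + 1) := by
      rw [Nat.mul_succ]
      omega
    have hle1 : 2 ^ t * (u / 2 ^ t + 1) ≤ 2 ^ t * (v / 2 ^ t) :=
      Nat.mul_le_mul_left _ huv
    have hle2 : 2 ^ t * (v / 2 ^ t) ≤ v := Nat.mul_div_le v (2 ^ t)
    refine ⟨2 ^ t * (u / 2 ^ t) + (2 ^ t - 1), j0 + c - 1,
        2 ^ t * (u / 2 ^ t) + (2 ^ t - 1) + 1, j0, ?_, ?_, ?_, ?_⟩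
    · refine ⟨by omega, by omega, by omega, by omega⟩
    · refine ⟨by omega, by omega, le_refl _, by omega⟩
    · exact Or.inr ⟨rfl, rfl, rfl⟩
    · have hdiv1 : (2 ^ t * (u / 2 ^ t) + (2 ^ t - 1)) / 2 ^ t = u / 2 ^ t := by
        rw [Nat.mul_add_div hT0, Nat.div_eq_of_lt (show 2 ^ t - 1 < 2 ^ t by omega), Nat.add_zero]
      have hmod1 : (2 ^ t * (u / 2 ^ t) + (2 ^ t - 1)) % 2 ^ t = 2 ^ t - 1 := by
        rw [Nat.mul_add_mod, Nat.mod_eq_of_lt (show 2 ^ t - 1 < 2 ^ t by omega)]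
      have hdiv2 : (2 ^ t * (u / 2 ^ t) + (2 ^ t - 1) + 1) / 2 ^ t = u / 2 ^ t + 1 := by
        rw [hsucc, Nat.mul_div_cancel_left _ hT0]
      have hmod2 : (2 ^ t * (u / 2 ^ t) + (2 ^ t - 1) + 1) % 2 ^ t = 0 := by
        rw [hsucc, Nat.mul_mod_right]
      have hqb : u / 2 ^ t + 1 < 2 ^ (m - t) := by
        have := div_lt_pow_sub m t v ht (by omega)
        omega
      have hmor := morton_row_mono (m - t) (u / 2 ^ t) (u / 2 ^ t + 1)
        (j0 / 2 ^ t) (by omega) hqb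
      have e1 : mhAddr m t (2 ^ t * (u / 2 ^ t) + (2 ^ t - 1)) (j0 + c - 1)
          = (2 ^ t) ^ 2 * mortonIndex (m - t) (u / 2 ^ t) (j0 / 2 ^ t)
            + ((2 ^ t - 1) * 2 ^ t + (j0 + c - 1) % 2 ^ t) := by
        unfold mhAddr
        rw [hdiv1, hmod1, hAB, add_assoc]
      have e2 : mhAddr m t (2 ^ t * (u / 2 ^ t) + (2 ^ t - 1) + 1) j0
          = (2 ^ t) ^ 2 * mortonIndex (m - t) (u / 2 ^ t + 1) (j0 / 2 ^ t)
            + j0 % 2 ^ t := by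
        unfold mhAddr
        rw [hdiv2, hmod2, Nat.zero_mul, Nat.add_zero]
      rw [e1, e2, hTT]
      have hkey : (2 ^ t) ^ 2 * mortonIndex (m - t) (u / 2 ^ t) (j0 / 2 ^ t)
            + 2 * (2 ^ t) ^ 2
          ≤ (2 ^ t) ^ 2 * mortonIndex (m - t) (u / 2 ^ t + 1) (j0 / 2 ^ t) := by
        calc (2 ^ t) ^ 2 * mortonIndex (m - t) (u / 2 ^ t) (j0 / 2 ^ t) + 2 * (2 ^ t) ^ 2
            = (2 ^ t) ^ 2 * (mortonIndex (m - t) (u / 2 ^ t) (j0 / 2 ^ t) + 2) := by ring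
          _ ≤ (2 ^ t) ^ 2 * mortonIndex (m - t) (u / 2 ^ t + 1) (j0 / 2 ^ t) :=
              Nat.mul_le_mul_left _ hmor
      have hw : (j0 + c - 1) % 2 ^ t < 2 ^ t := Nat.mod_lt _ hT0
      omega
  · -- columns cross
    have hlt : j0 / 2 ^ t < (j0 + c - 1) / 2 ^ t := by
      have : j0 / 2 ^ t ≤ (j0 + c - 1) / 2 ^ t := Nat.div_le_div_right (by omega)
      omega
    have hdm : 2 ^ t * (j0 / 2 ^ t) + j0 % 2 ^ t = j0 := Nat.div_add_mod j0 (2 ^ t)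
    have hml : j0 % 2 ^ t < 2 ^ t := Nat.mod_lt _ hT0
    have hsucc : 2 ^ t * (j0 / 2 ^ t) + (2 ^ t - 1) + 1 = 2 ^ t * (j0 / 2 ^ t + 1) := by
      rw [Nat.mul_succ]
      omega
    have hle1 : 2 ^ t * (j0 / 2 ^ t + 1) ≤ 2 ^ t * ((j0 + c - 1) / 2 ^ t) :=
      Nat.mul_le_mul_left _ hlt
    have hle2 : 2 ^ t * ((j0 + c - 1) / 2 ^ t) ≤ j0 + c - 1 :=
      Nat.mul_div_le _ (2 ^ t)
    refine ⟨i0, 2 ^ t * (j0 / 2 ^ t) + (2 ^ t - 1), i0,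
        2 ^ t * (j0 / 2 ^ t) + (2 ^ t - 1) + 1, ?_, ?_, ?_, ?_⟩
    · refine ⟨le_refl _, by omega, by omega, by omega⟩
    · refine ⟨le_refl _, by omega, by omega, by omega⟩
    · exact Or.inl ⟨rfl, rfl⟩
    · have hdiv1 : (2 ^ t * (j0 / 2 ^ t) + (2 ^ t - 1)) / 2 ^ t = j0 / 2 ^ t := by
        rw [Nat.mul_add_div hT0, Nat.div_eq_of_lt (show 2 ^ t - 1 < 2 ^ t by omega), Nat.add_zero]
      have hmod1 : (2 ^ t * (j0 / 2 ^ t) + (2 ^ t - 1)) % 2 ^ t = 2 ^ t - 1 := by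
        rw [Nat.mul_add_mod, Nat.mod_eq_of_lt (show 2 ^ t - 1 < 2 ^ t by omega)]
      have hdiv2 : (2 ^ t * (j0 / 2 ^ t) + (2 ^ t - 1) + 1) / 2 ^ t = j0 / 2 ^ t + 1 := by
        rw [hsucc, Nat.mul_div_cancel_left _ hT0]
      have hmod2 : (2 ^ t * (j0 / 2 ^ t) + (2 ^ t - 1) + 1) % 2 ^ t = 0 := by
        rw [hsucc, Nat.mul_mod_right]
      have hqb : j0 / 2 ^ t + 1 < 2 ^ (m - t) := by
        have := div_lt_pow_sub m t (j0 + c - 1) ht (by omega)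
        omega
      have hmor := morton_col_mono (m - t) (i0 / 2 ^ t) (j0 / 2 ^ t)
        (j0 / 2 ^ t + 1) (by omega) hqb
      have e1 : mhAddr m t i0 (2 ^ t * (j0 / 2 ^ t) + (2 ^ t - 1))
          = (2 ^ t) ^ 2 * mortonIndex (m - t) (i0 / 2 ^ t) (j0 / 2 ^ t)
            + (i0 % 2 ^ t * 2 ^ t + (2 ^ t - 1)) := by
        unfold mhAddr
        rw [hdiv1, hmod1, add_assoc]
      have e2 : mhAddr m t i0 (2 ^ t * (j0 / 2 ^ t) + (2 ^ t - 1) + 1)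
          = (2 ^ t) ^ 2 * mortonIndex (m - t) (i0 / 2 ^ t) (j0 / 2 ^ t + 1)
            + i0 % 2 ^ t * 2 ^ t := by
        unfold mhAddr
        rw [hdiv2, hmod2, Nat.add_zero]
      rw [e1, e2]
      have hkey : (2 ^ t) ^ 2 * mortonIndex (m - t) (i0 / 2 ^ t) (j0 / 2 ^ t)
            + (2 ^ t) ^ 2
          ≤ (2 ^ t) ^ 2 * mortonIndex (m - t) (i0 / 2 ^ t) (j0 / 2 ^ t + 1) := by
        calc (2 ^ t) ^ 2 * mortonIndex (m - t) (i0 / 2 ^ t) (j0 / 2 ^ t) + (2 ^ t) ^ 2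
            = (2 ^ t) ^ 2 * (mortonIndex (m - t) (i0 / 2 ^ t) (j0 / 2 ^ t) + 1) := by ring
          _ ≤ (2 ^ t) ^ 2 * mortonIndex (m - t) (i0 / 2 ^ t) (j0 / 2 ^ t + 1) :=
              Nat.mul_le_mul_left _ hmor
      omega
end

section
/- In the Morton-hybrid layout with threshold T, an aligned sub-matrix arising in the Morton recursion (i.e., a quadrant at some recursion level) of size 2^a·T × 2^a·T occupies a contiguous range of 4^a·T² linear addresses. -/
lemma mortonIndex_succ_s15 (n u v : ℕ) :
    mortonIndex (n + 1) u v = 2 * (u % 2) + v % 2 + 4 * mortonIndex n (u / 2) (v / 2) := by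
  unfold mortonIndex
  rw [Finset.sum_range_succ', Finset.mul_sum, add_comm]
  simp only [pow_zero, Nat.div_one, mul_one, pow_succ, Nat.div_div_eq_div_mul]
  congr 1
  refine Finset.sum_congr rfl fun k _ => ?_
  ring_nf

lemma mortonIndex_lt_four_pow {a u v : ℕ} (hu : u < 2 ^ a) (hv : v < 2 ^ a) :
    mortonIndex a u v < 4 ^ a := by
  induction a generalizing u v with
  | zero => simp [mortonIndex]
  | succ a ih =>
    rw [pow_succ] at hu hv
    have hhigh := ih (u := u / 2) (v := v / 2) (by omega) (by omega)
    rw [mortonIndex_succ_s15, pow_succ]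
    omega

lemma exists_mortonIndex_eq {a z : ℕ} (hz : z < 4 ^ a) :
    ∃ u < 2 ^ a, ∃ v < 2 ^ a, mortonIndex a u v = z := by
  induction a generalizing z with
  | zero => exact ⟨0, by simp, 0, by simp, by simp_all [mortonIndex]⟩
  | succ a ih =>
    rw [pow_succ] at hz
    obtain ⟨u, hu, v, hv, huv⟩ := ih (z := z / 4) (by omega)
    refine ⟨2 * u + z % 4 / 2, by rw [pow_succ]; omega, 2 * v + z % 2, by rw [pow_succ]; omega, ?_⟩
    rw [mortonIndex_succ_s15, show (2 * u + z % 4 / 2) / 2 = u by omega,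
      show (2 * v + z % 2) / 2 = v by omega, huv]
    omega

lemma mortonIndex_mul_two_pow_add {a n u v : ℕ} (p q : ℕ) (ha : a ≤ n)
    (hu : u < 2 ^ a) (hv : v < 2 ^ a) :
    mortonIndex n (p * 2 ^ a + u) (q * 2 ^ a + v) =
      4 ^ a * mortonIndex (n - a) p q + mortonIndex a u v := by
  induction a generalizing n u v with
  | zero => simp_all [mortonIndex]
  | succ a ih =>
    obtain ⟨n, rfl⟩ : ∃ n', n = n' + 1 := ⟨n - 1, by omega⟩
    rw [pow_succ] at hu hv
    have hlow := ih (n := n) (u := u / 2) (v := v / 2) (by omega) (by omega) (by omega)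
    have double : ∀ x, x * 2 ^ (a + 1) = 2 * (x * 2 ^ a) := fun x => by ring
    rw [mortonIndex_succ_s15, mortonIndex_succ_s15, Nat.add_sub_add_right, double, double,
      show (2 * (p * 2 ^ a) + u) / 2 = p * 2 ^ a + u / 2 by omega,
      show (2 * (q * 2 ^ a) + v) / 2 = q * 2 ^ a + v / 2 by omega, hlow,
      show (2 * (p * 2 ^ a) + u) % 2 = u % 2 by omega,
      show (2 * (q * 2 ^ a) + v) % 2 = v % 2 by omega]
    ring

lemma mortonIndex_mul_two_pow {a n : ℕ} (p q : ℕ) (ha : a ≤ n) :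
    mortonIndex n (p * 2 ^ a) (q * 2 ^ a) = 4 ^ a * mortonIndex (n - a) p q := by
  simpa [mortonIndex] using
    mortonIndex_mul_two_pow_add p q ha (Nat.two_pow_pos a) (Nat.two_pow_pos a)

theorem exists_mortonIndex_dyadic_square_iff {a n : ℕ} (p q : ℕ) (ha : a ≤ n) (z : ℕ) :
    (∃ u v, p * 2 ^ a ≤ u ∧ u < (p + 1) * 2 ^ a ∧
        q * 2 ^ a ≤ v ∧ v < (q + 1) * 2 ^ a ∧ mortonIndex n u v = z) ↔
      mortonIndex n (p * 2 ^ a) (q * 2 ^ a) ≤ z ∧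
        z < mortonIndex n (p * 2 ^ a) (q * 2 ^ a) + 4 ^ a := by
  simp only [mortonIndex_mul_two_pow p q ha, add_one_mul]
  constructor
  · rintro ⟨_, _, hu, hu', hv, hv', rfl⟩
    obtain ⟨u, rfl⟩ := Nat.exists_eq_add_of_le hu
    obtain ⟨v, rfl⟩ := Nat.exists_eq_add_of_le hv
    rw [mortonIndex_mul_two_pow_add p q ha (by omega) (by omega)]
    have hlow := mortonIndex_lt_four_pow (a := a) (u := u) (v := v) (by omega) (by omega)
    omega
  · rintro ⟨hz, hz'⟩
    obtain ⟨u, hu, v, hv, huv⟩ :=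
      exists_mortonIndex_eq (a := a) (z := z - 4 ^ a * mortonIndex (n - a) p q) (by omega)
    refine ⟨p * 2 ^ a + u, q * 2 ^ a + v, by omega, by omega, by omega, by omega, ?_⟩
    rw [mortonIndex_mul_two_pow_add p q ha hu hv]
    omega

lemma mhAddr_two_pow_mul_add {m t r s : ℕ} (u v : ℕ) (hr : r < 2 ^ t) (hs : s < 2 ^ t) :
    mhAddr m t (2 ^ t * u + r) (2 ^ t * v + s) =
      (2 ^ t) ^ 2 * mortonIndex (m - t) u v + (r * 2 ^ t + s) := by
  have hT := Nat.two_pow_pos t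
  rw [mhAddr, Nat.mul_add_div hT, Nat.mul_add_div hT, Nat.div_eq_of_lt hr, Nat.div_eq_of_lt hs,
    Nat.mul_add_mod, Nat.mul_add_mod, Nat.mod_eq_of_lt hr, Nat.mod_eq_of_lt hs, add_zero, add_zero,
    add_assoc]

/-- The in-block offsets `r·T + s` fill `[0, T²)`, so only the block number `z / T²` matters. -/
theorem exists_mhAddr_eq_iff (m t : ℕ) (P : ℕ → ℕ → Prop) (z : ℕ) :
    (∃ i j, P (i / 2 ^ t) (j / 2 ^ t) ∧ mhAddr m t i j = z) ↔
      ∃ u v, P u v ∧ mortonIndex (m - t) u v = z / (2 ^ t) ^ 2 := by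
  have hT := Nat.two_pow_pos t
  constructor
  · rintro ⟨i, j, hP, rfl⟩
    refine ⟨_, _, hP, ?_⟩
    have hr := Nat.mod_lt i hT
    have hs := Nat.mod_lt j hT
    have hoffset : i % 2 ^ t * 2 ^ t + j % 2 ^ t < (2 ^ t) ^ 2 := by nlinarith
    have haddr := mhAddr_two_pow_mul_add (m := m) (i / 2 ^ t) (j / 2 ^ t) hr hs
    rw [Nat.div_add_mod, Nat.div_add_mod] at haddr
    rw [haddr, Nat.mul_add_div (by positivity), Nat.div_eq_of_lt hoffset, add_zero]
  · rintro ⟨u, v, hP, huv⟩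
    have hw := Nat.mod_lt z (pow_pos hT 2)
    have hr : z % (2 ^ t) ^ 2 / 2 ^ t < 2 ^ t := Nat.div_lt_of_lt_mul (by rwa [← sq])
    have hs := Nat.mod_lt (z % (2 ^ t) ^ 2) hT
    refine ⟨2 ^ t * u + z % (2 ^ t) ^ 2 / 2 ^ t, 2 ^ t * v + z % (2 ^ t) ^ 2 % 2 ^ t, ?_, ?_⟩
    · rwa [Nat.mul_add_div hT, Nat.mul_add_div hT, Nat.div_eq_of_lt hr, Nat.div_eq_of_lt hs,
        add_zero, add_zero]
    · rw [mhAddr_two_pow_mul_add u v hr hs, huv, Nat.div_add_mod', Nat.div_add_mod]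

theorem aligned_quadrant_contiguous_general (m t a p q : ℕ)
    (ha : a ≤ m - t)
    (T n : ℕ) (hT : T = 2 ^ t) (hn : n = 2 ^ a * T) :
    (∀ z : ℕ,
      (∃ u v : ℕ, p * 2 ^ a ≤ u ∧ u < (p + 1) * 2 ^ a ∧
          q * 2 ^ a ≤ v ∧ v < (q + 1) * 2 ^ a ∧ mortonIndex (m - t) u v = z) ↔
      (mortonIndex (m - t) (p * 2 ^ a) (q * 2 ^ a) ≤ z ∧
        z < mortonIndex (m - t) (p * 2 ^ a) (q * 2 ^ a) + 4 ^ a)) ∧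
    ∃ α : ℕ, ∀ z : ℕ,
      (∃ i j : ℕ, p * n ≤ i ∧ i < (p + 1) * n ∧
          q * n ≤ j ∧ j < (q + 1) * n ∧ mhAddr m t i j = z) ↔
      (α ≤ z ∧ z < α + 4 ^ a * T ^ 2) := by
  subst hT hn
  have hT := Nat.two_pow_pos t
  have hblocks := exists_mortonIndex_dyadic_square_iff p q ha
  refine ⟨hblocks, mortonIndex (m - t) (p * 2 ^ a) (q * 2 ^ a) * (2 ^ t) ^ 2, fun z => ?_⟩
  have hle (x i : ℕ) : x * (2 ^ a * 2 ^ t) ≤ i ↔ x * 2 ^ a ≤ i / 2 ^ t := by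
    rw [Nat.le_div_iff_mul_le hT, mul_assoc]
  have hlt (x i : ℕ) : i < x * (2 ^ a * 2 ^ t) ↔ i / 2 ^ t < x * 2 ^ a := by
    rw [Nat.div_lt_iff_lt_mul hT, mul_assoc]
  calc _ ↔ ∃ u v, (p * 2 ^ a ≤ u ∧ u < (p + 1) * 2 ^ a ∧ q * 2 ^ a ≤ v ∧ v < (q + 1) * 2 ^ a) ∧
          mortonIndex (m - t) u v = z / (2 ^ t) ^ 2 := by
        simpa only [hle, hlt, and_assoc] using exists_mhAddr_eq_iff m t
          (fun u v => p * 2 ^ a ≤ u ∧ u < (p + 1) * 2 ^ a ∧ q * 2 ^ a ≤ v ∧ v < (q + 1) * 2 ^ a) z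
    _ ↔ _ := by simpa only [and_assoc] using hblocks (z / (2 ^ t) ^ 2)
    _ ↔ _ := by rw [Nat.le_div_iff_mul_le (by positivity), Nat.div_lt_iff_lt_mul (by positivity),
      add_mul]

/-- In the Morton-hybrid layout with threshold `T = 2^t`, an
aligned sub-matrix arising in the Morton recursion (a recursion-level quadrant)
of size `2^a·T × 2^a·T` — rows `[p·2^a·T, (p+1)·2^a·T)`, columns
`[q·2^a·T, (q+1)·2^a·T)` — occupies a contiguous range of `4^a·T²` linear
addresses; indeed the Morton indices of the dyadic square of block coordinates
`[p·2^a, (p+1)·2^a) × [q·2^a, (q+1)·2^a)` form the contiguous interval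
`[MortonIndex(p·2^a, q·2^a), MortonIndex(p·2^a, q·2^a) + 4^a)`. -/
theorem aligned_quadrant_contiguous (m t a p q : ℕ) (ht : t ≤ m)
    (ha : a ≤ m - t)
    (hp : (p + 1) * 2 ^ a ≤ 2 ^ (m - t)) (hq : (q + 1) * 2 ^ a ≤ 2 ^ (m - t))
    (T n : ℕ) (hT : T = 2 ^ t) (hn : n = 2 ^ a * T) :
    (∀ z : ℕ,
      (∃ u v : ℕ, p * 2 ^ a ≤ u ∧ u < (p + 1) * 2 ^ a ∧
          q * 2 ^ a ≤ v ∧ v < (q + 1) * 2 ^ a ∧ mortonIndex (m - t) u v = z) ↔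
      (mortonIndex (m - t) (p * 2 ^ a) (q * 2 ^ a) ≤ z ∧
        z < mortonIndex (m - t) (p * 2 ^ a) (q * 2 ^ a) + 4 ^ a)) ∧
    ∃ α : ℕ, ∀ z : ℕ,
      (∃ i j : ℕ, p * n ≤ i ∧ i < (p + 1) * n ∧
          q * n ≤ j ∧ j < (q + 1) * n ∧ mhAddr m t i j = z) ↔
      (α ≤ z ∧ z < α + 4 ^ a * T ^ 2) :=
  aligned_quadrant_contiguous_general m t a p q ha T n hT hn
end
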